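/- Let X be a chain, let α be an order-preserving full transformation of X, and suppose α admits an inverse β in OP(X) that is not order-preserving, i.e. there exists an orientation-preserving full transformation β of X which is not order-preserving such that αβα = α and βαβ = β. Then Im(α) is bounded in X (Im(α) has both an upper bound and a lower bound in X). -/
import Mathlib


variable {X : Type*}

/-- The full transformation `f` is order-preserving on the subset `A`. -/
def OrdOn [LinearOrder X] (f : X → X) (A : Set X) : Prop :=
  ∀ ⦃x y : X⦄, x ∈ A → y ∈ A → x ≤ y → f x ≤ f y

/-- `Y` is an ideal of the full transformation `f`. -/
def IsIdealFull [LinearOrder X] (f : X → X) (Y : Set X) : Prop :=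
  Y.Nonempty ∧ OrdOn f Y ∧ OrdOn f Yᶜ ∧
    ∀ ⦃a b : X⦄, a ∈ Y → b ∈ Yᶜ → a ≤ b ∧ f b ≤ f a

/-- `f` is an orientation-preserving full transformation. -/
def IsOPFull [LinearOrder X] (f : X → X) : Prop := ∃ Y : Set X, IsIdealFull f Y

/-- If an order-preserving full transformation `α` admits an inverse `β` in `OP(X)` that is
not order-preserving, then `Im α` is bounded. -/
theorem stmt10 (X : Type*) [LinearOrder X] (α β : X → X)
    (hα : Monotone α) (hβ : IsOPFull β) (hβn : ¬ Monotone β)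
    (h1 : ∀ x, α (β (α x)) = α x) (h2 : ∀ x, β (α (β x)) = β x) :
    BddAbove (Set.range α) ∧ BddBelow (Set.range α) := by
  obtain ⟨Y, hYne, hY, hYc, hid⟩ := hβ
  -- α ∘ β fixes the range of α
  have fix : ∀ z ∈ Set.range α, α (β z) = z := by
    rintro z ⟨a, rfl⟩; exact h1 a
  -- β is order-preserving on the range of α
  have emb : ∀ z ∈ Set.range α, ∀ w ∈ Set.range α, z ≤ w → β z ≤ β w := by
    intro z hz w hw hzw
    by_contra h
    push_neg at h
    have hwz : w ≤ z := by
      have := hα h.le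
      rwa [fix z hz, fix w hw] at this
    have : z = w := le_antisymm hzw hwz
    exact absurd (this ▸ h) (lt_irrefl _)
  -- Yᶜ is nonempty, otherwise β would be monotone
  have hYcne : ∃ y, y ∈ Yᶜ := by
    by_contra h
    push_neg at h
    exact hβn fun a b hab => hY (by simpa using h a) (by simpa using h b) hab
  obtain ⟨y0, hy0⟩ := hYcne
  obtain ⟨x0, hx0⟩ := hYne
  by_cases hc : ∀ z ∈ Set.range α, z ∈ Y
  · -- range α ⊆ Y : upper bound y0, lower bound α (β y0)
    constructor
    · exact ⟨y0, fun z hz => (hid (hc z hz) hy0).1⟩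
    · refine ⟨α (β y0), fun z hz => ?_⟩
      have ht : α (β y0) ∈ Set.range α := ⟨β y0, rfl⟩
      have hbt : β (α (β y0)) = β y0 := h2 y0
      have h3 : β y0 ≤ β z := (hid (hc z hz) hy0).2
      have h3' : β (α (β y0)) ≤ β z := by rw [hbt]; exact h3
      have := hα h3'
      rwa [fix _ ht, fix z hz] at this
  · -- range α ⊆ Yᶜ
    push_neg at hc
    obtain ⟨v, hv, hvY⟩ := hc
    have hall : ∀ z ∈ Set.range α, z ∈ Yᶜ := by
      intro z hz
      by_contra hzc
      have hzY : z ∈ Y := by simpa using hzc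
      have h4 := hid hzY (hvY : v ∈ Yᶜ)
      have h5 : β z ≤ β v := emb z hz v hv h4.1
      have h6 : β z = β v := le_antisymm h5 h4.2
      have : z = v := by rw [← fix z hz, ← fix v hv, h6]
      exact hvY (this ▸ hzY)
    constructor
    · -- upper bound α (β x0)
      refine ⟨α (β x0), fun z hz => ?_⟩
      have hs : α (β x0) ∈ Set.range α := ⟨β x0, rfl⟩
      have hbs : β (α (β x0)) = β x0 := h2 x0
      have h3 : β z ≤ β x0 := (hid hx0 (hall z hz)).2
      have h3' : β z ≤ β (α (β x0)) := by rw [hbs]; exact h3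
      have := hα h3'
      rwa [fix z hz, fix _ hs] at this
    · exact ⟨x0, fun z hz => (hid hx0 (hall z hz)).1⟩
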